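/- Let B and Σ be n×n real symmetric positive definite matrices, let B^{1/2} denote the positive definite square root of B, and suppose B^{-1/2} Σ⁻¹ B^{-1/2} = Σ_{i=1}^{n} λᵢ vᵢvᵢᵀ, where λ₁,…,λₙ > 0 and v₁,…,vₙ is an orthonormal basis of ℝⁿ. Define B' = B^{1/2} (Σ_{i=1}^{n} max{λᵢ, 1} vᵢvᵢᵀ) B^{1/2}. Then tr(Σ(B' − B)Σ(B' − B)) ≤ n. -/

import Mathlib

/-!
With `P = B^{1/2}` and `U` the orthogonal matrix with rows `vᵢ`, the hypothesis says
`Σ⁻¹ = (P Uᵀ) diag(λ) (U P)`, and likewise `B' - B = (P Uᵀ) diag(max λᵢ 1 - 1) (U P)`.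
Hence `Σ (B' - B) = (U P)⁻¹ diag(c) (U P)` with `cᵢ = (max λᵢ 1 - 1) / λᵢ ∈ [0, 1)`, a matrix
similar to a diagonal one, and the trace of its square is `∑ cᵢ² ≤ n`.
-/

open Matrix

namespace Matrix

variable {ι κ R K : Type*}

theorem sum_smul_vecMulVec_self_eq [Fintype ι] [DecidableEq ι] [CommSemiring R] (f : ι → R)
    (v : ι → κ → R) : ∑ i, f i • vecMulVec (v i) (v i) = (of v)ᵀ * diagonal f * of v := by
  ext j k
  simp only [sum_apply, smul_apply, vecMulVec_apply, mul_apply, transpose_apply, of_apply,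
    diagonal_apply, smul_eq_mul, mul_ite, mul_zero, Finset.sum_ite_eq', Finset.mem_univ, if_true]
  exact Finset.sum_congr rfl fun i _ => by ring

theorem of_mul_transpose_of_eq_one [DecidableEq ι] [Fintype κ] [CommSemiring R] {v : ι → κ → R}
    (hv : ∀ i j, v i ⬝ᵥ v j = if i = j then 1 else 0) : of v * (of v)ᵀ = 1 := by
  ext i j
  simpa [mul_apply, one_apply, dotProduct] using hv i j

variable [Fintype ι] [DecidableEq ι] [Field K]

theorem mul_eq_inv_mul_diagonal_mul_of_inv_eq {S X P Q : Matrix ι ι K} (hP : IsUnit P)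
    (hQ : IsUnit Q) {d e : ι → K} (hd : ∀ i, d i ≠ 0) (hS : S⁻¹ = P * diagonal d * Q)
    (hX : X = P * diagonal e * Q) : S * X = Q⁻¹ * diagonal (e / d) * Q := by
  have hPdet := (isUnit_iff_isUnit_det P).mp hP
  have hQdet := (isUnit_iff_isUnit_det Q).mp hQ
  have hdiag : IsUnit (diagonal d) := by
    rw [isUnit_iff_isUnit_det, det_diagonal]
    exact (Finset.prod_ne_zero_iff.mpr fun i _ => hd i).isUnit
  have hSdet : IsUnit S.det := by
    rw [← isUnit_nonsing_inv_det_iff, ← isUnit_iff_isUnit_det, hS]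
    exact (hP.mul hdiag).mul hQ
  have hinv : diagonal d⁻¹ * diagonal d = 1 := by
    rw [diagonal_mul_diagonal, ← diagonal_one]
    exact congrArg diagonal (funext fun i => inv_mul_cancel₀ (hd i))
  have hSeq : S = Q⁻¹ * diagonal d⁻¹ * P⁻¹ := by
    rw [← nonsing_inv_nonsing_inv S hSdet]
    refine inv_eq_left_inv ?_
    rw [hS]
    simp only [Matrix.mul_assoc]
    rw [nonsing_inv_mul_cancel_left _ _ hPdet, ← Matrix.mul_assoc (diagonal _), hinv,
      Matrix.one_mul, nonsing_inv_mul _ hQdet]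
  rw [hSeq, hX]
  simp only [Matrix.mul_assoc]
  rw [nonsing_inv_mul_cancel_left _ _ hPdet, ← Matrix.mul_assoc (diagonal _),
    diagonal_mul_diagonal]
  simp only [div_eq_inv_mul]
  rfl

theorem trace_mul_self_of_eq_inv_mul_diagonal_mul {A Q : Matrix ι ι K} (hQ : IsUnit Q)
    {c : ι → K} (hA : A = Q⁻¹ * diagonal c * Q) : (A * A).trace = ∑ i, c i ^ 2 := by
  have hQdet := (isUnit_iff_isUnit_det Q).mp hQ
  rw [hA]
  simp only [Matrix.mul_assoc]
  rw [mul_nonsing_inv_cancel_left _ _ hQdet, ← Matrix.mul_assoc, trace_mul_cycle,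
    mul_nonsing_inv_cancel_right _ _ hQdet, diagonal_mul_diagonal, trace_diagonal]
  simp only [sq]

end Matrix

theorem sq_max_sub_one_div_le_one {x : ℝ} (hx : 0 < x) : ((max x 1 - 1) / x) ^ 2 ≤ 1 := by
  have h0 : 0 ≤ (max x 1 - 1) / x := div_nonneg (by simp) hx.le
  have h1 : (max x 1 - 1) / x ≤ 1 :=
    (div_le_one hx).mpr (sub_le_iff_le_add.mpr (max_le (by linarith) (by linarith)))
  exact pow_le_one₀ h0 h1

theorem stmt_8_general {n : ℕ}
    (B S sqB : Matrix (Fin n) (Fin n) ℝ)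
    (hsqB : sqB.PosDef) (hsq : sqB * sqB = B)
    (lam : Fin n → ℝ) (hlam : ∀ i, 0 < lam i)
    (v : Fin n → (Fin n → ℝ))
    (horth : ∀ i j, v i ⬝ᵥ v j = if i = j then (1 : ℝ) else 0)
    (hdecomp : sqB⁻¹ * S⁻¹ * sqB⁻¹ = ∑ i, lam i • vecMulVec (v i) (v i))
    (B' : Matrix (Fin n) (Fin n) ℝ)
    (hB' : B' = sqB * (∑ i, max (lam i) 1 • vecMulVec (v i) (v i)) * sqB) :
    (S * (B' - B) * (S * (B' - B))).trace ≤ (n : ℝ) := by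
  rw [sum_smul_vecMulVec_self_eq] at hdecomp hB'
  set U := of v
  have hUUt : U * Uᵀ = 1 := of_mul_transpose_of_eq_one horth
  have hUtU : Uᵀ * U = 1 := mul_eq_one_comm.mp hUUt
  have hP : IsUnit sqB := hsqB.isUnit
  have hPdet := (isUnit_iff_isUnit_det sqB).mp hP
  have hS : S⁻¹ = (sqB * Uᵀ) * diagonal lam * (U * sqB) :=
    calc S⁻¹ = sqB * (sqB⁻¹ * S⁻¹ * sqB⁻¹) * sqB := by
          simp only [Matrix.mul_assoc]
          rw [mul_nonsing_inv_cancel_left _ _ hPdet, nonsing_inv_mul _ hPdet, Matrix.mul_one]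
      _ = (sqB * Uᵀ) * diagonal lam * (U * sqB) := by
          rw [hdecomp]
          simp only [Matrix.mul_assoc]
  have hX : B' - B = (sqB * Uᵀ) * diagonal (fun i => max (lam i) 1 - 1) * (U * sqB) := by
    rw [hB', ← hsq, ← diagonal_sub, diagonal_one]
    simp only [Matrix.mul_assoc, Matrix.mul_sub, Matrix.sub_mul, Matrix.one_mul]
    rw [← Matrix.mul_assoc Uᵀ U, hUtU, Matrix.one_mul]
  have hU : IsUnit U := (isUnit_iff_isUnit_det U).mpr (isUnit_det_of_left_inverse hUtU)
  have hUt : IsUnit Uᵀ := (isUnit_iff_isUnit_det Uᵀ).mpr (isUnit_det_of_left_inverse hUUt)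
  rw [trace_mul_self_of_eq_inv_mul_diagonal_mul (hU.mul hP)
    (mul_eq_inv_mul_diagonal_mul_of_inv_eq (hP.mul hUt) (hU.mul hP) (fun i => (hlam i).ne') hS hX)]
  calc _ ≤ ∑ _i : Fin n, (1 : ℝ) := Finset.sum_le_sum fun i _ => sq_max_sub_one_div_le_one (hlam i)
    _ = n := by simp

theorem stmt_8 {n : ℕ}
    (B S sqB : Matrix (Fin n) (Fin n) ℝ)
    (hB : B.PosDef) (hS : S.PosDef)
    (hsqB : sqB.PosDef) (hsq : sqB * sqB = B)
    (lam : Fin n → ℝ) (hlam : ∀ i, 0 < lam i)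
    (v : Fin n → (Fin n → ℝ))
    (horth : ∀ i j, v i ⬝ᵥ v j = if i = j then (1 : ℝ) else 0)
    (hdecomp : sqB⁻¹ * S⁻¹ * sqB⁻¹ = ∑ i, lam i • vecMulVec (v i) (v i))
    (B' : Matrix (Fin n) (Fin n) ℝ)
    (hB' : B' = sqB * (∑ i, max (lam i) 1 • vecMulVec (v i) (v i)) * sqB) :
    (S * (B' - B) * (S * (B' - B))).trace ≤ (n : ℝ) :=
  stmt_8_general B S sqB hsqB hsq lam hlam v horth hdecomp B' hB'
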